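/- arXiv:1710.02721 — 7 statements merged into one kernel-verified Lean document; each statement's English description precedes it below -/
import Mathlib

section
/- Let K > 0, n a natural number, ω, p, q : ℝ → ℝ continuous, and let a, b : ℝ → ℝ be differentiable and satisfy the n-th mode system a' = nωb − Ka + p, b' = −nωa − Kb + q. Then at any time t at which the point (a(t), b(t)) lies strictly outside the evolving circle, i.e. (a(t) − p(t)/(2K))² + (b(t) − q(t)/(2K))² > (p(t)/(2K))² + (q(t)/(2K))², the quantity a(t)² + b(t)² is strictly decreasing (its derivative is negative), and at any time t at which (a(t), b(t)) lies strictly inside the evolving circle, a(t)² + b(t)² is strictly increasing (its derivative is positive). -/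
/-!
Along the mode system the rotation terms `±nω ab` cancel in `(a² + b²)' = 2(a a' + b b')`,
leaving `(a² + b²)' = -2 (K (a² + b²) - (p a + q b))`. Completing the square, the power of
`(a, b)` with respect to the evolving circle is `(K (a² + b²) - (p a + q b)) / K`, so with
`K > 0` the point lies outside (inside) the circle exactly when `a² + b²` decreases (increases).
-/

theorem hasDerivAt_sq_add_sq {a b : ℝ → ℝ} {a' b' t : ℝ} (ha : HasDerivAt a a' t)
    (hb : HasDerivAt b b' t) :
    HasDerivAt (fun s => a s ^ 2 + b s ^ 2) (2 * (a t * a' + b t * b')) t := by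
  refine ((ha.fun_pow 2).fun_add (hb.fun_pow 2)).congr_deriv ?_
  norm_num
  ring

theorem deriv_sq_add_sq_of_mode_system {K w p q : ℝ} {a b : ℝ → ℝ} {t : ℝ}
    (ha : DifferentiableAt ℝ a t) (hb : DifferentiableAt ℝ b t)
    (hade : deriv a t = w * b t - K * a t + p) (hbde : deriv b t = -w * a t - K * b t + q) :
    deriv (fun s => a s ^ 2 + b s ^ 2) t = -2 * (K * (a t ^ 2 + b t ^ 2) - (p * a t + q * b t)) := by
  rw [(hasDerivAt_sq_add_sq ha.hasDerivAt hb.hasDerivAt).deriv, hade, hbde]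
  ring

theorem circle_power_eq {K : ℝ} (hK : K ≠ 0) (x y p q : ℝ) :
    (x - p / (2 * K)) ^ 2 + (y - q / (2 * K)) ^ 2 - ((p / (2 * K)) ^ 2 + (q / (2 * K)) ^ 2) =
      (K * (x ^ 2 + y ^ 2) - (p * x + q * y)) / K := by
  field_simp
  ring

theorem water_wheel_mode_evolving_circle_monotonicity_general
    (K : ℝ) (hK : 0 < K) (n : ℕ)
    (ω p q a b : ℝ → ℝ)
    (ha : Differentiable ℝ a) (hb : Differentiable ℝ b)
    (hade : ∀ t, deriv a t = (n : ℝ) * ω t * b t - K * a t + p t)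
    (hbde : ∀ t, deriv b t = -((n : ℝ) * ω t) * a t - K * b t + q t) :
    ∀ t,
      ((a t - p t / (2 * K)) ^ 2 + (b t - q t / (2 * K)) ^ 2 >
          (p t / (2 * K)) ^ 2 + (q t / (2 * K)) ^ 2 →
        deriv (fun s => a s ^ 2 + b s ^ 2) t < 0) ∧
      ((a t - p t / (2 * K)) ^ 2 + (b t - q t / (2 * K)) ^ 2 <
          (p t / (2 * K)) ^ 2 + (q t / (2 * K)) ^ 2 →
        0 < deriv (fun s => a s ^ 2 + b s ^ 2) t) := by
  intro t
  have hpower := circle_power_eq hK.ne' (a t) (b t) (p t) (q t)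
  rw [deriv_sq_add_sq_of_mode_system (ha t) (hb t) (hade t) (hbde t)]
  constructor
  · intro houtside
    have := (lt_div_iff₀ hK).mp (hpower ▸ sub_pos.mpr houtside)
    linarith
  · intro hinside
    have := (div_lt_iff₀ hK).mp (hpower ▸ sub_neg.mpr hinside)
    linarith

/-- For the `n`-th mode system, `a² + b²` is strictly decreasing at times when
`(a, b)` lies strictly outside the evolving circle, and strictly increasing at
times when it lies strictly inside. -/
theorem water_wheel_mode_evolving_circle_monotonicity
    (K : ℝ) (hK : 0 < K) (n : ℕ)
    (ω p q a b : ℝ → ℝ)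
    (hω : Continuous ω) (hp : Continuous p) (hq : Continuous q)
    (ha : Differentiable ℝ a) (hb : Differentiable ℝ b)
    (hade : ∀ t, deriv a t = (n : ℝ) * ω t * b t - K * a t + p t)
    (hbde : ∀ t, deriv b t = -((n : ℝ) * ω t) * a t - K * b t + q t) :
    ∀ t,
      ((a t - p t / (2 * K)) ^ 2 + (b t - q t / (2 * K)) ^ 2 >
          (p t / (2 * K)) ^ 2 + (q t / (2 * K)) ^ 2 →
        deriv (fun s => a s ^ 2 + b s ^ 2) t < 0) ∧
      ((a t - p t / (2 * K)) ^ 2 + (b t - q t / (2 * K)) ^ 2 <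
          (p t / (2 * K)) ^ 2 + (q t / (2 * K)) ^ 2 →
        0 < deriv (fun s => a s ^ 2 + b s ^ 2) t) :=
  water_wheel_mode_evolving_circle_monotonicity_general K hK n ω p q a b ha hb hade hbde
end

section
/- Let K > 0, n a natural number, ω, p, q : ℝ → ℝ continuous with |p(t)| ≤ M and |q(t)| ≤ M for all t ≥ 0, for some constant M ≥ 0. If a, b : ℝ → ℝ are differentiable and satisfy the n-th mode system a' = nωb − Ka + p, b' = −nωa − Kb + q, then for all t ≥ 0, a(t)² + b(t)² ≤ max( a(0)² + b(0)², 2M²/K² ). In particular all trajectories of the mode system remain bounded whenever the inflow modes p and q are bounded. -/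
/-!
The energy `V = a² + b²` satisfies `V' = -2KV + 2(ap + bq)`: the rotation terms `± nωab` cancel.
By Cauchy–Schwarz `ap + bq ≤ √(2V) M`, which is less than `KV` as soon as `V > 2M²/K²`,
so `V` decreases whenever it lies above `2M²/K²` and can never rise above `max (V 0) (2M²/K²)`.
-/

open Set

theorem image_le_max_of_deriv_right_neg_of_lt {f f' : ℝ → ℝ} {a b C : ℝ}
    (hf : ContinuousOn f (Icc a b)) (hf' : ∀ x ∈ Ico a b, HasDerivWithinAt f (f' x) (Ici x) x)
    (hneg : ∀ x ∈ Ico a b, C < f x → f' x < 0) :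
    ∀ ⦃x⦄, x ∈ Icc a b → f x ≤ max (f a) C := by
  intro x hx
  refine le_of_forall_pos_le_add fun ε hε => ?_
  -- Fence `f` by the constant `max (f a) C + ε`, which `f` can only touch where it is above `C`.
  refine image_le_of_deriv_right_lt_deriv_boundary (B := fun _ => max (f a) C + ε)
    (B' := fun _ => 0) hf hf' ?_ (fun _ => hasDerivAt_const _ _) ?_ hx
  · linarith [le_max_left (f a) C]
  · intro y hy hfy
    exact hneg y hy (by linarith [le_max_right (f a) C])

theorem mul_add_mul_lt_mul_sq_add_sq {K M a b p q : ℝ} (hK : 0 < K)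
    (hp : |p| ≤ M) (hq : |q| ≤ M) (h : 2 * M ^ 2 / K ^ 2 < a ^ 2 + b ^ 2) :
    a * p + b * q < K * (a ^ 2 + b ^ 2) := by
  have hpq : p ^ 2 + q ^ 2 ≤ 2 * M ^ 2 := by
    nlinarith [sq_le_sq' (abs_le.mp hp).1 (abs_le.mp hp).2,
      sq_le_sq' (abs_le.mp hq).1 (abs_le.mp hq).2]
  have hM : 2 * M ^ 2 < K ^ 2 * (a ^ 2 + b ^ 2) := by
    rwa [div_lt_iff₀' (by positivity)] at h
  have hV : 0 < a ^ 2 + b ^ 2 := lt_of_le_of_lt (by positivity) h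
  have cauchy_schwarz : (a * p + b * q) ^ 2 ≤ (a ^ 2 + b ^ 2) * (p ^ 2 + q ^ 2) := by
    nlinarith [sq_nonneg (a * q - b * p)]
  have hsq : (a * p + b * q) ^ 2 < (K * (a ^ 2 + b ^ 2)) ^ 2 := by
    calc (a * p + b * q) ^ 2 ≤ (a ^ 2 + b ^ 2) * (2 * M ^ 2) :=
          cauchy_schwarz.trans (mul_le_mul_of_nonneg_left hpq hV.le)
      _ < (a ^ 2 + b ^ 2) * (K ^ 2 * (a ^ 2 + b ^ 2)) := mul_lt_mul_of_pos_left hM hV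
      _ = (K * (a ^ 2 + b ^ 2)) ^ 2 := by ring
  exact lt_of_pow_lt_pow_left₀ 2 (by positivity) hsq

theorem water_wheel_mode_bounded_general
    (K : ℝ) (hK : 0 < K) (n : ℕ) (M : ℝ)
    (ω p q a b : ℝ → ℝ)
    (hpM : ∀ t ≥ (0 : ℝ), |p t| ≤ M) (hqM : ∀ t ≥ (0 : ℝ), |q t| ≤ M)
    (ha : Differentiable ℝ a) (hb : Differentiable ℝ b)
    (hade : ∀ t, deriv a t = (n : ℝ) * ω t * b t - K * a t + p t)
    (hbde : ∀ t, deriv b t = -((n : ℝ) * ω t) * a t - K * b t + q t) :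
    ∀ t ≥ (0 : ℝ),
      a t ^ 2 + b t ^ 2 ≤ max (a 0 ^ 2 + b 0 ^ 2) (2 * M ^ 2 / K ^ 2) := by
  have energy_deriv : ∀ x, HasDerivAt (fun s => a s ^ 2 + b s ^ 2)
      (-2 * K * (a x ^ 2 + b x ^ 2) + 2 * (a x * p x + b x * q x)) x := by
    intro x
    refine (((ha x).hasDerivAt.pow 2).add ((hb x).hasDerivAt.pow 2)).congr_deriv ?_
    rw [hade, hbde]
    push_cast
    ring
  intro t ht
  refine image_le_max_of_deriv_right_neg_of_lt (f := fun s => a s ^ 2 + b s ^ 2)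
    (fun x _ => (energy_deriv x).continuousAt.continuousWithinAt)
    (fun x _ => (energy_deriv x).hasDerivWithinAt) ?_ ⟨ht, le_rfl⟩
  intro x hx hlarge
  linarith [mul_add_mul_lt_mul_sq_add_sq hK (hpM x hx.1) (hqM x hx.1) hlarge]

/-- Trajectories of the `n`-th mode system remain bounded whenever the inflow
modes `p` and `q` are bounded: for all `t ≥ 0`,
`a(t)² + b(t)² ≤ max (a(0)² + b(0)²) (2M²/K²)`. -/
theorem water_wheel_mode_bounded
    (K : ℝ) (hK : 0 < K) (n : ℕ) (M : ℝ) (hM : 0 ≤ M)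
    (ω p q a b : ℝ → ℝ)
    (hω : Continuous ω) (hp : Continuous p) (hq : Continuous q)
    (hpM : ∀ t ≥ (0 : ℝ), |p t| ≤ M) (hqM : ∀ t ≥ (0 : ℝ), |q t| ≤ M)
    (ha : Differentiable ℝ a) (hb : Differentiable ℝ b)
    (hade : ∀ t, deriv a t = (n : ℝ) * ω t * b t - K * a t + p t)
    (hbde : ∀ t, deriv b t = -((n : ℝ) * ω t) * a t - K * b t + q t) :
    ∀ t ≥ (0 : ℝ),
      a t ^ 2 + b t ^ 2 ≤ max (a 0 ^ 2 + b 0 ^ 2) (2 * M ^ 2 / K ^ 2) :=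
  water_wheel_mode_bounded_general K hK n M ω p q a b hpM hqM ha hb hade hbde
end

section
/- Let N be a natural number, K a real number, and let ω, a₀,…,a_N, b₀,…,b_N, p₀,…,p_N, q₀,…,q_N : ℝ → ℝ with each aₙ and bₙ differentiable, satisfying for each n = 0,…,N the mode equations aₙ'(t) = nω(t)bₙ(t) − Kaₙ(t) + pₙ(t) and bₙ'(t) = −nω(t)aₙ(t) − Kbₙ(t) + qₙ(t). Define m(θ,t) = Σ_{n=0}^N ( aₙ(t) sin(nθ) + bₙ(t) cos(nθ) ) and q(θ,t) = Σ_{n=0}^N ( pₙ(t) sin(nθ) + qₙ(t) cos(nθ) ). Then m satisfies the mass-conservation equation ∂m/∂t (θ,t) = q(θ,t) − K m(θ,t) − ω(t) ∂m/∂θ (θ,t) for all θ and t. -/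
/-!
Both sides are finite trigonometric sums, and differentiation in `θ` acts on coefficients by
`(aₙ, bₙ) ↦ (-n bₙ, n aₙ)`. Comparing coefficients of `sin nθ` and `cos nθ`, the equation
`∂m/∂t = q − Km − ω ∂m/∂θ` is exactly the system of mode equations.
-/

open Real Finset

noncomputable def trigSum (s : Finset ℕ) (a b : ℕ → ℝ) (θ : ℝ) : ℝ :=
  ∑ n ∈ s, (a n * sin (n * θ) + b n * cos (n * θ))

theorem hasDerivAt_trigSum (s : Finset ℕ) (a b : ℕ → ℝ) (θ : ℝ) :
    HasDerivAt (trigSum s a b) (trigSum s (fun n => -(n * b n)) (fun n => n * a n) θ) θ := by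
  refine HasDerivAt.fun_sum fun n _ => ?_
  have hlin : HasDerivAt (fun φ : ℝ => (n : ℝ) * φ) n θ := by
    simpa using (hasDerivAt_id θ).const_mul (n : ℝ)
  refine ((((hasDerivAt_sin _).comp θ hlin).const_mul (a n)).fun_add
    (((hasDerivAt_cos _).comp θ hlin).const_mul (b n))).congr_deriv ?_
  ring

theorem hasDerivAt_trigSum_coeffs {s : Finset ℕ} {a b : ℕ → ℝ → ℝ} {a' b' : ℕ → ℝ} {t : ℝ}
    (ha : ∀ n ∈ s, HasDerivAt (a n) (a' n) t) (hb : ∀ n ∈ s, HasDerivAt (b n) (b' n) t)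
    (θ : ℝ) :
    HasDerivAt (fun τ => trigSum s (a · τ) (b · τ) θ) (trigSum s a' b' θ) t :=
  HasDerivAt.fun_sum fun n hn => ((ha n hn).mul_const _).add ((hb n hn).mul_const _)

/-- If the Fourier coefficients satisfy the mode equations, then the finite
trigonometric sums `m(θ,t)` and `q(θ,t)` satisfy the mass-conservation equation
`∂m/∂t = q − Km − ω ∂m/∂θ`. -/
theorem water_wheel_mass_conservation
    (N : ℕ) (K : ℝ) (ω : ℝ → ℝ)
    (a b p q : ℕ → ℝ → ℝ)
    (ha : ∀ n ≤ N, Differentiable ℝ (a n)) (hb : ∀ n ≤ N, Differentiable ℝ (b n))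
    (hade : ∀ n ≤ N, ∀ t, deriv (a n) t = (n : ℝ) * ω t * b n t - K * a n t + p n t)
    (hbde : ∀ n ≤ N, ∀ t, deriv (b n) t = -((n : ℝ) * ω t) * a n t - K * b n t + q n t)
    (m Q : ℝ → ℝ → ℝ)
    (hm : ∀ θ t, m θ t = ∑ n ∈ Finset.range (N + 1),
        (a n t * Real.sin ((n : ℝ) * θ) + b n t * Real.cos ((n : ℝ) * θ)))
    (hQ : ∀ θ t, Q θ t = ∑ n ∈ Finset.range (N + 1),
        (p n t * Real.sin ((n : ℝ) * θ) + q n t * Real.cos ((n : ℝ) * θ))) :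
    ∀ θ t, deriv (fun s => m θ s) t =
      Q θ t - K * m θ t - ω t * deriv (fun φ => m φ t) θ := by
  intro θ t
  have hle : ∀ n ∈ range (N + 1), n ≤ N := fun _ => mem_range_succ_iff.mp
  have hm_t : deriv (fun s => m θ s) t =
      trigSum (range (N + 1)) (fun n => deriv (a n) t) (fun n => deriv (b n) t) θ := by
    rw [show (fun s => m θ s) = _ from funext (hm θ)]
    exact (hasDerivAt_trigSum_coeffs (fun n hn => (ha n (hle n hn) t).hasDerivAt)
      (fun n hn => (hb n (hle n hn) t).hasDerivAt) θ).deriv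
  have hm_θ : deriv (fun φ => m φ t) θ =
      trigSum (range (N + 1)) (fun n => -(n * b n t)) (fun n => n * a n t) θ := by
    rw [show (fun φ => m φ t) = _ from funext (hm · t)]
    exact (hasDerivAt_trigSum _ _ _ θ).deriv
  rw [hm_t, hm_θ, hm, hQ]
  simp only [trigSum, mul_sum, ← sum_sub_distrib]
  refine sum_congr rfl fun n hn => ?_
  rw [hade n (hle n hn), hbde n (hle n hn)]
  ring
end

section
/- Let K, ν, I, g, R > 0 and set σ = ν/(IK). Let a₁, b₁, ω, p₁, q₁ : ℝ → ℝ with a₁, b₁, ω differentiable and q₁ differentiable, satisfying the lowest-mode system a₁'(t) = ω(t)b₁(t) − K a₁(t) + p₁(t), b₁'(t) = −ω(t)a₁(t) − K b₁(t) + q₁(t), I ω'(t) = −ν ω(t) + π g R a₁(t). Define, as functions of the rescaled time τ (with t = τ/K): x(τ) = ω(τ/K)/K, y(τ) = (πgR/(Kν)) a₁(τ/K), r(τ) = (πgR/(K²ν)) q₁(τ/K), μ(τ) = (πgR/(K²ν)) p₁(τ/K), and z(τ) = r(τ) − (πgR/(Kν)) b₁(τ/K). Then x, y, z are differentiable in τ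 and satisfy the water wheel system x' = σ(y − x), y' = r(τ)x − y − xz + μ(τ), z' = xy − z + r'(τ), where prime denotes d/dτ. -/
open Real

/-- The change of variables `t = τ/K`, `x = ω/K`, `y = (πgR/(Kν)) a₁`,
`z = r − (πgR/(Kν)) b₁`, `r = (πgR/(K²ν)) q₁`, `μ = (πgR/(K²ν)) p₁` turns the
lowest-mode water wheel system into the non-autonomous system
`x' = σ(y−x)`, `y' = rx − y − xz + μ`, `z' = xy − z + r'` with `σ = ν/(IK)`. -/
theorem water_wheel_change_of_variables
    (K ν I g R σ : ℝ)
    (hK : 0 < K) (hν : 0 < ν) (hI : 0 < I) (hg : 0 < g) (hR : 0 < R)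
    (hσ : σ = ν / (I * K))
    (a₁ b₁ ω p₁ q₁ : ℝ → ℝ)
    (ha₁ : Differentiable ℝ a₁) (hb₁ : Differentiable ℝ b₁)
    (hω : Differentiable ℝ ω) (hq₁ : Differentiable ℝ q₁)
    (hade : ∀ t, deriv a₁ t = ω t * b₁ t - K * a₁ t + p₁ t)
    (hbde : ∀ t, deriv b₁ t = -(ω t) * a₁ t - K * b₁ t + q₁ t)
    (hωde : ∀ t, I * deriv ω t = -ν * ω t + π * g * R * a₁ t)
    (x y z r μ : ℝ → ℝ)
    (hx : ∀ τ, x τ = ω (τ / K) / K)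
    (hy : ∀ τ, y τ = (π * g * R / (K * ν)) * a₁ (τ / K))
    (hr : ∀ τ, r τ = (π * g * R / (K ^ 2 * ν)) * q₁ (τ / K))
    (hμ : ∀ τ, μ τ = (π * g * R / (K ^ 2 * ν)) * p₁ (τ / K))
    (hz : ∀ τ, z τ = r τ - (π * g * R / (K * ν)) * b₁ (τ / K)) :
    (Differentiable ℝ x ∧ Differentiable ℝ y ∧ Differentiable ℝ z) ∧
      ∀ τ, deriv x τ = σ * (y τ - x τ) ∧
        deriv y τ = r τ * x τ - y τ - x τ * z τ + μ τ ∧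
        deriv z τ = x τ * y τ - z τ + deriv r τ := by
  have hxf : x = fun τ => ω (τ / K) / K := funext hx
  have hyf : y = fun τ => (π * g * R / (K * ν)) * a₁ (τ / K) := funext hy
  have hrf : r = fun τ => (π * g * R / (K ^ 2 * ν)) * q₁ (τ / K) := funext hr
  have hμf : μ = fun τ => (π * g * R / (K ^ 2 * ν)) * p₁ (τ / K) := funext hμ
  have hzf : z = fun τ => r τ - (π * g * R / (K * ν)) * b₁ (τ / K) := funext hz
  have hcomp : ∀ (f : ℝ → ℝ), Differentiable ℝ f → ∀ τ : ℝ,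
      HasDerivAt (fun s => f (s / K)) (deriv f (τ / K) * (1 / K)) τ := by
    intro f hf τ
    have h1 : HasDerivAt (fun s : ℝ => s / K) (1 / K) τ := (hasDerivAt_id τ).div_const K
    exact ((hf (τ / K)).hasDerivAt).comp τ h1
  have hKne : (K : ℝ) ≠ 0 := ne_of_gt hK
  have hνne : (ν : ℝ) ≠ 0 := ne_of_gt hν
  have hIne : (I : ℝ) ≠ 0 := ne_of_gt hI
  have hxd : ∀ τ : ℝ, HasDerivAt x (deriv ω (τ / K) * (1 / K) / K) τ := by
    intro τ; rw [hxf]; exact (hcomp ω hω τ).div_const K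
  have hyd : ∀ τ : ℝ, HasDerivAt y
      ((π * g * R / (K * ν)) * (deriv a₁ (τ / K) * (1 / K))) τ := by
    intro τ; rw [hyf]; exact (hcomp a₁ ha₁ τ).const_mul _
  have hrd : ∀ τ : ℝ, HasDerivAt r
      ((π * g * R / (K ^ 2 * ν)) * (deriv q₁ (τ / K) * (1 / K))) τ := by
    intro τ; rw [hrf]; exact (hcomp q₁ hq₁ τ).const_mul _
  have hzd : ∀ τ : ℝ, HasDerivAt z
      ((π * g * R / (K ^ 2 * ν)) * (deriv q₁ (τ / K) * (1 / K)) -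
        (π * g * R / (K * ν)) * (deriv b₁ (τ / K) * (1 / K))) τ := by
    intro τ; rw [hzf]
    exact (hrd τ).sub ((hcomp b₁ hb₁ τ).const_mul _)
  refine ⟨⟨fun τ => (hxd τ).differentiableAt,
          fun τ => (hyd τ).differentiableAt,
          fun τ => (hzd τ).differentiableAt⟩, fun τ => ?_⟩
  have hω' : deriv ω (τ / K) = (-ν * ω (τ / K) + π * g * R * a₁ (τ / K)) / I := by
    field_simp
    linarith [hωde (τ / K)]
  refine ⟨?_, ?_, ?_⟩
  · rw [(hxd τ).deriv, hω', hx τ, hy τ, hσ]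
    field_simp
    ring
  · rw [(hyd τ).deriv, hade (τ / K), hx τ, hy τ, hz τ, hr τ, hμ τ]
    field_simp
    ring
  · rw [(hzd τ).deriv, (hrd τ).deriv, hbde (τ / K), hx τ, hy τ, hz τ, hr τ]
    field_simp
    ring
end

section
/- Let σ be a real number and r, μ : ℝ → ℝ differentiable. If x, y, z : ℝ → ℝ are differentiable and satisfy the water wheel system x' = σ(y − x), y' = r(τ)x − y − xz + μ(τ), z' = xy − z + r'(τ), then y is twice differentiable and satisfies the oscillator identity y''(τ) = −y(τ) g₂(τ) + h₂(τ), where g₂ = −1 − σ(r(τ) − z(τ)) + x(τ)² and h₂ = −μ(τ) + μ'(τ) − (1 + σ) r(τ) x(τ) + (2 + σ) x(τ) z(τ). -/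
open Real

/-- Competitive modes oscillator form for the second component of the water wheel
system: `y'' = −y g₂ + h₂` with `g₂ = −1 − σ(r − z) + x²` and
`h₂ = −μ + μ' − (1 + σ) r x + (2 + σ) x z`. -/
theorem water_wheel_oscillator_y
    (σ : ℝ) (r μ : ℝ → ℝ) (hr : Differentiable ℝ r) (hμ : Differentiable ℝ μ)
    (x y z : ℝ → ℝ)
    (hx : Differentiable ℝ x) (hy : Differentiable ℝ y) (hz : Differentiable ℝ z)
    (hxde : ∀ τ, deriv x τ = σ * (y τ - x τ))
    (hyde : ∀ τ, deriv y τ = r τ * x τ - y τ - x τ * z τ + μ τ)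
    (hzde : ∀ τ, deriv z τ = x τ * y τ - z τ + deriv r τ) :
    Differentiable ℝ (deriv y) ∧
      ∀ τ, deriv (deriv y) τ =
        -(y τ) * (-1 - σ * (r τ - z τ) + x τ ^ 2)
          + (-μ τ + deriv μ τ - (1 + σ) * r τ * x τ + (2 + σ) * x τ * z τ) := by
  have hd : deriv y = fun τ => r τ * x τ - y τ - x τ * z τ + μ τ := funext hyde
  have hdiff : Differentiable ℝ (fun τ => r τ * x τ - y τ - x τ * z τ + μ τ) :=
    (((hr.mul hx).sub hy).sub (hx.mul hz)).add hμ
  constructor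
  · rw [hd]; exact hdiff
  · intro τ
    have h2 : HasDerivAt (fun τ => r τ * x τ - y τ - x τ * z τ + μ τ)
        (((deriv r τ * x τ + r τ * deriv x τ) - deriv y τ)
          - (deriv x τ * z τ + x τ * deriv z τ) + deriv μ τ) τ :=
      ((((hr τ).hasDerivAt.mul (hx τ).hasDerivAt).sub (hy τ).hasDerivAt).sub
        ((hx τ).hasDerivAt.mul (hz τ).hasDerivAt)).add (hμ τ).hasDerivAt
    rw [hd, h2.deriv, hxde, hyde, hzde]
    ring
end

section
/- Let σ be a real number and r, μ : ℝ → ℝ with r twice differentiable and μ differentiable. If x, y, z : ℝ → ℝ are differentiable and satisfy the water wheel system x' = σ(y − x), y' = r(τ)x − y − xz + μ(τ), z' = xy − z + r'(τ), then z is twice differentiable and satisfies the oscillator identity z''(τ) = −z(τ) g₃(τ) + h₃(τ), where g₃ = −1 + x(τ)² and h₃ = −r'(τ) + r''(τ) + μ(τ) x(τ) − (2 + σ) x(τ) y(τ) + r(τ) x(τ)² + σ y(τ)². -/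
theorem hasDerivAt_deriv_of_deriv_eq_mul_sub_add {x y z w : ℝ → ℝ} {τ : ℝ}
    (hx : DifferentiableAt ℝ x τ) (hy : DifferentiableAt ℝ y τ) (hz : DifferentiableAt ℝ z τ)
    (hw : DifferentiableAt ℝ w τ) (hzde : ∀ t, deriv z t = x t * y t - z t + w t) :
    HasDerivAt (deriv z) (deriv x τ * y τ + x τ * deriv y τ - deriv z τ + deriv w τ) τ :=
  (((hx.hasDerivAt.mul hy.hasDerivAt).sub hz.hasDerivAt).add hw.hasDerivAt).congr_of_eventuallyEq
    (.of_forall hzde)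

theorem water_wheel_oscillator_z_general
    (σ : ℝ) (r μ : ℝ → ℝ)
    (hr' : Differentiable ℝ (deriv r))
    (x y z : ℝ → ℝ)
    (hx : Differentiable ℝ x) (hy : Differentiable ℝ y) (hz : Differentiable ℝ z)
    (hxde : ∀ τ, deriv x τ = σ * (y τ - x τ))
    (hyde : ∀ τ, deriv y τ = r τ * x τ - y τ - x τ * z τ + μ τ)
    (hzde : ∀ τ, deriv z τ = x τ * y τ - z τ + deriv r τ) :
    Differentiable ℝ (deriv z) ∧
      ∀ τ, deriv (deriv z) τ =
        -(z τ) * (-1 + x τ ^ 2)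
          + (-(deriv r τ) + deriv (deriv r) τ + μ τ * x τ
              - (2 + σ) * x τ * y τ + r τ * x τ ^ 2 + σ * y τ ^ 2) := by
  have hz' : ∀ τ, HasDerivAt (deriv z)
      (deriv x τ * y τ + x τ * deriv y τ - deriv z τ + deriv (deriv r) τ) τ := fun τ =>
    hasDerivAt_deriv_of_deriv_eq_mul_sub_add (hx τ) (hy τ) (hz τ) (hr' τ) hzde
  refine ⟨fun τ => (hz' τ).differentiableAt, fun τ => ?_⟩
  rw [(hz' τ).deriv, hxde, hyde, hzde]
  ring

/-- Competitive modes oscillator form for the third component of the water wheel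
system: `z'' = −z g₃ + h₃` with `g₃ = −1 + x²` and
`h₃ = −r' + r'' + μx − (2 + σ) x y + r x² + σ y²`. -/
theorem water_wheel_oscillator_z
    (σ : ℝ) (r μ : ℝ → ℝ)
    (hr : Differentiable ℝ r) (hr' : Differentiable ℝ (deriv r))
    (hμ : Differentiable ℝ μ)
    (x y z : ℝ → ℝ)
    (hx : Differentiable ℝ x) (hy : Differentiable ℝ y) (hz : Differentiable ℝ z)
    (hxde : ∀ τ, deriv x τ = σ * (y τ - x τ))
    (hyde : ∀ τ, deriv y τ = r τ * x τ - y τ - x τ * z τ + μ τ)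
    (hzde : ∀ τ, deriv z τ = x τ * y τ - z τ + deriv r τ) :
    Differentiable ℝ (deriv z) ∧
      ∀ τ, deriv (deriv z) τ =
        -(z τ) * (-1 + x τ ^ 2)
          + (-(deriv r τ) + deriv (deriv r) τ + μ τ * x τ
              - (2 + σ) * x τ * y τ + r τ * x τ ^ 2 + σ * y τ ^ 2) :=
  water_wheel_oscillator_z_general σ r μ hr' x y z hx hy hz hxde hyde hzde
end

section
/- Let σ be a real number and r : ℝ → ℝ differentiable, and suppose μ ≡ 0 (symmetric inflow). Let x, y, z : [0,∞) → ℝ be continuously differentiable and satisfy the water wheel system x' = σ(y − x), y' = r(τ)x − y − xz, z' = xy − z + r'(τ) on [0,∞), with initial conditions x(0) = 0 and y(0) = 0. Then x(τ) = 0 and y(τ) = 0 for all τ ≥ 0 (the wheel never spins), and z satisfies z'(τ) = r'(τ) − z(τ), so that z(τ) = e^{−τ} ( z(0) + ∫₀^τ e^{s} r'(s) ds ). -/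
/-!
The first two equations are linear in `(x, y)`, with coefficients built from `σ`, `r` and `z`
that are bounded on every compact interval, so `‖(x, y)'‖ ≤ K ‖(x, y)‖` there and
Grönwall's inequality forces `(x, y) ≡ 0` from the initial condition `x(0) = y(0) = 0`.
The third equation then becomes the scalar linear equation `z' = r' − z`, solved by variation of
constants: `(e^τ z)' = e^τ r'`.
-/

open Real intervalIntegral Set

theorem norm_waterWheel_xy_field_le (σ ρ ζ u v : ℝ) :
    ‖(σ * (v - u), ρ * u - v - u * ζ)‖ ≤ max (2 * |σ|) (|ρ| + 1 + |ζ|) * ‖(u, v)‖ := by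
  have hu : |u| ≤ ‖(u, v)‖ := le_max_left _ _
  have hv : |v| ≤ ‖(u, v)‖ := le_max_right _ _
  refine max_le ?_ ?_
  · calc ‖σ * (v - u)‖ ≤ |σ| * (|v| + |u|) := by
          rw [Real.norm_eq_abs, abs_mul]; gcongr; exact abs_sub _ _
      _ ≤ 2 * |σ| * ‖(u, v)‖ := by nlinarith [abs_nonneg σ]
      _ ≤ _ := by gcongr; exact le_max_left _ _
  · calc ‖ρ * u - v - u * ζ‖ ≤ |ρ| * |u| + |v| + |u| * |ζ| := by
          rw [Real.norm_eq_abs, ← abs_mul, ← abs_mul]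
          exact (abs_sub _ _).trans (add_le_add_left (abs_sub _ _) _)
      _ ≤ (|ρ| + 1 + |ζ|) * ‖(u, v)‖ := by
          nlinarith [abs_nonneg ρ, abs_nonneg ζ, abs_nonneg u]
      _ ≤ _ := by gcongr; exact le_max_right _ _

theorem waterWheel_xy_eq_zero {σ : ℝ} {r x y z : ℝ → ℝ} (hr : Continuous r) (hz : Continuous z)
    (hx : Differentiable ℝ x) (hy : Differentiable ℝ y)
    (hxde : ∀ τ ≥ (0 : ℝ), deriv x τ = σ * (y τ - x τ))
    (hyde : ∀ τ ≥ (0 : ℝ), deriv y τ = r τ * x τ - y τ - x τ * z τ)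
    (hx0 : x 0 = 0) (hy0 : y 0 = 0) {τ : ℝ} (hτ : 0 ≤ τ) : x τ = 0 ∧ y τ = 0 := by
  obtain ⟨K, hK⟩ := (isCompact_Icc (a := 0) (b := τ)).bddAbove_image
    (f := fun t => max (2 * |σ|) (|r t| + 1 + |z t|)) (by fun_prop)
  have hxy := eq_zero_of_abs_deriv_le_mul_abs_self_of_eq_zero_right
    (f := fun t => (x t, y t)) (f' := fun t => (deriv x t, deriv y t)) (K := K)
    (hx.continuous.prodMk hy.continuous).continuousOn
    (fun t _ => ((hx t).hasDerivAt.prodMk (hy t).hasDerivAt).hasDerivWithinAt)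
    (by simp [hx0, hy0])
    (fun t ht => by
      rw [hxde t ht.1, hyde t ht.1]
      exact (norm_waterWheel_xy_field_le _ _ _ _ _).trans <| mul_le_mul_of_nonneg_right
        (hK ⟨t, Ico_subset_Icc_self ht, rfl⟩) (norm_nonneg _))
    τ ⟨hτ, le_rfl⟩
  simpa [Prod.ext_iff] using hxy

theorem eq_exp_neg_mul_add_integral_of_deriv_eq_sub {z g : ℝ → ℝ} (hz : ContDiff ℝ 1 z)
    (hde : ∀ t ≥ (0 : ℝ), deriv z t = g t - z t) {τ : ℝ} (hτ : 0 ≤ τ) :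
    z τ = exp (-τ) * (z 0 + ∫ s in (0 : ℝ)..τ, exp s * g s) := by
  have hdz : Differentiable ℝ z := hz.differentiable one_ne_zero
  have hg : ∀ t ∈ uIcc 0 τ, exp t * g t = exp t * (deriv z t + z t) := fun t ht => by
    rw [hde t (uIcc_of_le hτ ▸ ht).1]; ring
  have hderiv : ∀ t ∈ uIcc 0 τ, HasDerivAt (fun s => exp s * z s) (exp t * g t) t :=
    fun t ht => by
      rw [hg t ht, mul_add, add_comm]
      exact (hasDerivAt_exp t).mul (hdz t).hasDerivAt
  have hint : IntervalIntegrable (fun s => exp s * g s) MeasureTheory.volume 0 τ := by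
    have hcont : Continuous fun s => exp s * (deriv z s + z s) := by
      have := hz.continuous_deriv le_rfl
      fun_prop
    exact (hcont.continuousOn.congr hg).intervalIntegrable
  rw [integral_eq_sub_of_hasDerivAt hderiv hint, exp_zero, one_mul, exp_neg]
  field_simp
  ring

/-- With symmetric inflow (`μ ≡ 0`) and zero initial angular velocity and first
mode (`x(0) = y(0) = 0`), the water wheel never spins: `x ≡ 0` and `y ≡ 0` on
`[0,∞)`, while `z` satisfies `z' = r' − z`, so that
`z(τ) = e^{−τ}(z(0) + ∫₀^τ e^s r'(s) ds)`. -/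
theorem water_wheel_symmetric_no_spin
    (σ : ℝ) (r : ℝ → ℝ) (hr : Differentiable ℝ r)
    (x y z : ℝ → ℝ)
    (hx : ContDiff ℝ 1 x) (hy : ContDiff ℝ 1 y) (hz : ContDiff ℝ 1 z)
    (hxde : ∀ τ ≥ (0 : ℝ), deriv x τ = σ * (y τ - x τ))
    (hyde : ∀ τ ≥ (0 : ℝ), deriv y τ = r τ * x τ - y τ - x τ * z τ)
    (hzde : ∀ τ ≥ (0 : ℝ), deriv z τ = x τ * y τ - z τ + deriv r τ)
    (hx0 : x 0 = 0) (hy0 : y 0 = 0) :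
    ∀ τ ≥ (0 : ℝ),
      x τ = 0 ∧ y τ = 0 ∧
        deriv z τ = deriv r τ - z τ ∧
        z τ = Real.exp (-τ) * (z 0 + ∫ s in (0 : ℝ)..τ, Real.exp s * deriv r s) := by
  have hxy : ∀ τ ≥ (0 : ℝ), x τ = 0 ∧ y τ = 0 := fun τ hτ =>
    waterWheel_xy_eq_zero hr.continuous hz.continuous (hx.differentiable one_ne_zero)
      (hy.differentiable one_ne_zero) hxde hyde hx0 hy0 hτ
  have hzde' : ∀ τ ≥ (0 : ℝ), deriv z τ = deriv r τ - z τ := fun τ hτ => by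
    rw [hzde τ hτ, (hxy τ hτ).1]
    ring
  intro τ hτ
  exact ⟨(hxy τ hτ).1, (hxy τ hτ).2, hzde' τ hτ,
    eq_exp_neg_mul_add_integral_of_deriv_eq_sub hz hzde' hτ⟩
end
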